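/- Let P ∈ ℝ[X] and let u ∈ ℝ be a root of P of multiplicity k (P^{(i)}(u) = 0 for i < k, P^{(k)}(u) ≠ 0). Let R ∈ ℝ[X] with R(u) ≠ 0, let ε ∈ ℝ* be a nonzero infinitesimal, and set Q := P + ε·R ∈ ℝ*[X] (a linear deformation of P). If ξ ∈ ℝ* is infinitesimal and Q(u + ξ) = 0, then ξ^k·P^{(k)}(u)/(k!·ε·R(u)) has standard part −1; in particular, when k = 1, (ξ·P'(u))/(ε·R(u)) has standard part −1. -/

import Mathlib

/-!
Since all derivatives of `P` of order `< k` vanish at `u` and the `k`-th does not, `u` is a root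
of multiplicity exactly `k`, so `P = (X - u)^k q` with `k! q(u) = P⁽ᵏ⁾(u) ≠ 0`. The equation
`Q(u + ξ) = 0` then reads `ξ^k q(u + ξ) = -ε R(u + ξ)`, and `q(u + ξ)`, `R(u + ξ)` have the nonzero
standard parts `q(u)`, `R(u)`.
-/

open Hyperreal Polynomial

/-- The coercion `ℝ → ℝ*` as a ring homomorphism. -/
noncomputable def realToHyper : ℝ →+* ℝ* :=
  (Filter.Germ.coeRingHom _).comp (Pi.constRingHom ℕ ℝ)

set_option linter.deprecated false

@[simp]
theorem realToHyper_apply (r : ℝ) : realToHyper r = r := rfl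

section RootMultiplicity

variable {R : Type*} [CommRing R] [NoZeroDivisors R] [CharZero R] {p : R[X]} {t : R} {k : ℕ}

theorem rootMultiplicity_eq_of_iterate_derivative_eval
    (hlt : ∀ i < k, (derivative^[i] p).eval t = 0) (hk : (derivative^[k] p).eval t ≠ 0) :
    p.rootMultiplicity t = k := by
  have hp : p ≠ 0 := by rintro rfl; simp at hk
  refine le_antisymm (not_lt.1 fun hlt' ↦ hk (isRoot_iterate_derivative_of_lt_rootMultiplicity hlt'))
    ?_
  cases k with
  | zero => exact Nat.zero_le _
  | succ n => exact lt_rootMultiplicity_of_isRoot_iterate_derivative hp fun i hi ↦ hlt i (by omega)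

theorem exists_eq_X_sub_C_pow_mul_of_iterate_derivative_eval
    (hlt : ∀ i < k, (derivative^[i] p).eval t = 0) (hk : (derivative^[k] p).eval t ≠ 0) :
    ∃ q : R[X], p = (X - C t) ^ k * q ∧ (derivative^[k] p).eval t = k.factorial * q.eval t := by
  have hmult := rootMultiplicity_eq_of_iterate_derivative_eval hlt hk
  refine ⟨p /ₘ (X - C t) ^ k, ?_, ?_⟩
  · conv_lhs => rw [← p.pow_mul_divByMonic_rootMultiplicity_eq t, hmult]
  · rw [← nsmul_eq_mul, ← hmult, eval_iterate_derivative_rootMultiplicity]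

end RootMultiplicity

theorem isSt_eval_map (p : ℝ[X]) {x : ℝ*} {r : ℝ} (h : IsSt x r) :
    IsSt ((p.map realToHyper).eval x) (p.eval r) := by
  induction p using Polynomial.induction_on' with
  | add p q hp hq => simpa using hp.add hq
  | monomial n a =>
    have hpow : IsSt (x ^ n) (r ^ n) := by
      induction n with
      | zero => simpa using isSt_refl_real 1
      | succ m ih => simpa [pow_succ] using ih.mul h
    simpa using (isSt_refl_real a).mul hpow

theorem isSt_mul_div_mul_of_mul_add_mul_eq_zero {x e H S : ℝ*} {a b : ℝ}
    (heq : x * H + e * S = 0) (he : e ≠ 0) (hH : IsSt H a) (hS : IsSt S b) (ha : a ≠ 0)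
    (hb : b ≠ 0) :
    IsSt (x * a / (e * b)) (-1) := by
  have hHb : IsSt (H * b) (a * b) := hH.mul (isSt_refl_real b)
  have hHb_ne : ¬Infinitesimal (H * b) := fun h0 ↦ mul_ne_zero ha hb (hHb.unique h0)
  have hH0 : H ≠ 0 := by rintro rfl; exact ha (hH.unique infinitesimal_zero)
  have hb0 : (b : ℝ*) ≠ 0 := by exact_mod_cast hb
  have hx : x = -(e * S) / H := by field_simp; linear_combination heq
  have hrw : x * a / (e * b) = -(S * a) * (H * b)⁻¹ := by rw [hx]; field_simp
  rw [hrw]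
  convert (hS.mul (isSt_refl_real a)).neg.mul (hHb.inv hHb_ne) using 1
  field_simp

theorem linear_deformation_root_estimate_general (P R : Polynomial ℝ) (u : ℝ) (k : ℕ)
    (hmult : ∀ i < k, (derivative^[i] P).eval u = 0)
    (hk : (derivative^[k] P).eval u ≠ 0)
    (hR : R.eval u ≠ 0)
    (e : ℝ*) (he0 : e ≠ 0)
    (ξ : ℝ*) (hξ : Infinitesimal ξ)
    (hroot : (P.map realToHyper + Polynomial.C e * R.map realToHyper).eval ((u : ℝ*) + ξ) = 0) :
    IsSt (ξ ^ k * (((derivative^[k] P).eval u : ℝ) : ℝ*) /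
      ((Nat.factorial k : ℝ*) * e * ((R.eval u : ℝ) : ℝ*))) (-1) := by
  obtain ⟨q, hPq, hkq⟩ := exists_eq_X_sub_C_pow_mul_of_iterate_derivative_eval hmult hk
  have hq : q.eval u ≠ 0 := fun h0 ↦ hk (by rw [hkq, h0, mul_zero])
  have hu : IsSt ((u : ℝ*) + ξ) u := by simpa using (isSt_refl_real u).add hξ
  have hsplit : ξ ^ k * (q.map realToHyper).eval ((u : ℝ*) + ξ)
      + e * (R.map realToHyper).eval ((u : ℝ*) + ξ) = 0 := by
    rw [← hroot, hPq]
    simp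
  convert isSt_mul_div_mul_of_mul_add_mul_eq_zero hsplit he0 (isSt_eval_map q hu)
    (isSt_eval_map R hu) hq hR using 1
  rw [hkq, coe_mul, ← realToHyper_apply k.factorial, map_natCast]
  field_simp

/-- Linear deformation `Q = P + ε R`: if `u` is a root of `P` of multiplicity `k`,
`R(u) ≠ 0` and `u + ξ` is a root of `Q` with `ξ` infinitesimal, then
`st (ξ^k P⁽ᵏ⁾(u)/(k! ε R(u))) = -1`. -/
theorem linear_deformation_root_estimate (P R : Polynomial ℝ) (u : ℝ) (k : ℕ)
    (hmult : ∀ i < k, (derivative^[i] P).eval u = 0)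
    (hk : (derivative^[k] P).eval u ≠ 0)
    (hR : R.eval u ≠ 0)
    (e : ℝ*) (he0 : e ≠ 0) (he : Infinitesimal e)
    (ξ : ℝ*) (hξ : Infinitesimal ξ)
    (hroot : (P.map realToHyper + Polynomial.C e * R.map realToHyper).eval ((u : ℝ*) + ξ) = 0) :
    IsSt (ξ ^ k * (((derivative^[k] P).eval u : ℝ) : ℝ*) /
      ((Nat.factorial k : ℝ*) * e * ((R.eval u : ℝ) : ℝ*))) (-1) :=
  linear_deformation_root_estimate_general P R u k hmult hk hR e he0 ξ hξ hroot
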